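/- arXiv:1105.4170 — 6 statements merged into one kernel-verified Lean document; each statement's English description precedes it below -/
import Mathlib

section
/- If A is a k×n real matrix of rank k all of whose k×k minors are nonnegative, then the τ-function τ_A(x,y,t) = Σ_I Δ_I(A) E_I(x,y,t) is strictly positive for all (x,y,t) ∈ ℝ³. -/
/-!
Each `E_I` is positive because `κ` is increasing, so `τ_A` is a sum of nonnegative terms. Rank `k`
provides `k` linearly independent columns, i.e. a nonzero and hence positive maximal minor, which
makes one of the terms positive.
-/

open Matrix

/-- The maximal minor of a `k × n` matrix `A` with column set `S` (ordered increasingly);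
defined to be `0` if `S` does not have exactly `k` elements. -/
noncomputable def minor {k n : ℕ} (A : Matrix (Fin k) (Fin n) ℝ) (S : Finset (Fin n)) : ℝ :=
  if h : S.card = k then (A.submatrix id (S.orderEmbOfFin h)).det else 0

/-- The Vandermonde-type constant `∏_{l<m, in I}(κ_{j_m} − κ_{j_l})` times `∏_{j∈I} E_j`. -/
noncomputable def EI {n : ℕ} (κ : Fin n → ℝ) (I : Finset (Fin n)) (x y t : ℝ) : ℝ :=
  (∏ a ∈ I, ∏ b ∈ I.filter (fun b => a < b), (κ b - κ a)) *
    ∏ j ∈ I, Real.exp (κ j * x + κ j ^ 2 * y + κ j ^ 3 * t)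

lemma EI_pos {n : ℕ} {κ : Fin n → ℝ} (hκ : StrictMono κ) (I : Finset (Fin n)) (x y t : ℝ) :
    0 < EI κ I x y t := by
  refine mul_pos (Finset.prod_pos fun a _ => Finset.prod_pos fun b hb => ?_)
    (Finset.prod_pos fun j _ => Real.exp_pos _)
  exact sub_pos.mpr (hκ (Finset.mem_filter.mp hb).2)

lemma Matrix.exists_linearIndepOn_col_card_eq_rank {m n K : Type*} [Fintype n] [Field K]
    (A : Matrix m n K) :
    ∃ S : Finset n, S.card = A.rank ∧ LinearIndepOn K A.col (S : Set n) := by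
  classical
  obtain ⟨b, -, -, hspan, hli⟩ :=
    exists_linearIndepOn_extension (linearIndepOn_empty K A.col) (Set.empty_subset Set.univ)
  have hspan_eq : Submodule.span K (A.col '' b) = Submodule.span K (Set.range A.col) := by
    refine le_antisymm (Submodule.span_mono (Set.image_subset_range _ _)) ?_
    rw [Submodule.span_le, ← Set.image_univ]
    exact hspan
  refine ⟨b.toFinset, ?_, by simpa using hli⟩
  have := finrank_span_eq_card hli
  rw [← Set.image_eq_range, hspan_eq, ← rank_eq_finrank_span_cols] at this
  rw [this, Set.toFinset_card]

lemma minor_ne_zero_of_linearIndepOn {k n : ℕ} {A : Matrix (Fin k) (Fin n) ℝ}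
    {S : Finset (Fin n)} (hS : S.card = k) (hli : LinearIndepOn ℝ A.col (S : Set (Fin n))) :
    minor A S ≠ 0 := by
  rw [minor, dif_pos hS, ← isUnit_iff_ne_zero, ← isUnit_iff_isUnit_det,
    ← linearIndependent_cols_iff_isUnit]
  exact hli.comp (fun i => ⟨S.orderEmbOfFin hS i, S.orderEmbOfFin_mem hS i⟩)
    fun i j hij => (S.orderEmbOfFin hS).injective (congrArg Subtype.val hij)

lemma exists_minor_ne_zero_of_rank_eq {k n : ℕ} {A : Matrix (Fin k) (Fin n) ℝ}
    (hrank : A.rank = k) :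
    ∃ S : Finset (Fin n), S.card = k ∧ minor A S ≠ 0 := by
  obtain ⟨S, hS, hli⟩ := A.exists_linearIndepOn_col_card_eq_rank
  rw [hrank] at hS
  exact ⟨S, hS, minor_ne_zero_of_linearIndepOn hS hli⟩

/-- If `A` is a real `k × n` matrix of rank `k` all of whose `k × k` minors are
nonnegative, then the τ-function `τ_A(x,y,t) = Σ_I Δ_I(A) E_I(x,y,t)` is strictly positive
on all of `ℝ³`. -/
theorem tau_pos_of_tnn (n k : ℕ) (κ : Fin n → ℝ) (hκ : StrictMono κ)
    (A : Matrix (Fin k) (Fin n) ℝ) (hrank : A.rank = k)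
    (hnn : ∀ S : Finset (Fin n), 0 ≤ minor A S) (x y t : ℝ) :
    0 < ∑ I ∈ Finset.powersetCard k (Finset.univ : Finset (Fin n)),
          minor A I * EI κ I x y t := by
  obtain ⟨S, hS, hS_ne⟩ := exists_minor_ne_zero_of_rank_eq hrank
  refine Finset.sum_pos' (fun I _ => mul_nonneg (hnn I) (EI_pos hκ I x y t).le) ⟨S, ?_, ?_⟩
  · exact Finset.mem_powersetCard.mpr ⟨Finset.subset_univ S, hS⟩
  · exact mul_pos ((hnn S).lt_of_ne hS_ne.symm) (EI_pos hκ S x y t)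
end

section
/- For a < b real and positive constants c_a, c_b, the function u = 2 ∂²_x log(c_a e^{ax + a²y + a³t} + c_b e^{bx + b²y + b³t}) satisfies the KP equation ∂_x(−4 u_t + 6 u u_x + u_{xxx}) + 3 u_{yy} = 0. -/
/-!
Write `τ = P + Q` with `P = c_a e^{ax+a²y+a³t}`, `Q = c_b e^{bx+b²y+b³t}`, and `w = Q / τ`.
Along each of `x`, `y`, `t` the weight `w` solves the logistic equation `w' = κ w (1 - w)` with
`κ = b - a`, `b² - a²`, `b³ - a³`, and `∂ₓ log τ = a + (b - a) w`. Hence `u = 2 (b - a)² w (1 - w)`,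
and every derivative of a polynomial in `w` is again one, obtained by applying the derivation
`D = X (1 - X) d/dX`. The KP equation becomes a polynomial identity in `w`, which follows from
`D² v = v - 6 v²` for `v = X (1 - X)` together with `3 (b² - a²)² - 4 (b - a) (b³ - a³) = -(b - a)⁴`.
-/

/-- `τ = c_a e^{ax + a²y + a³t} + c_b e^{bx + b²y + b³t}`. -/
noncomputable def tau2 (a b ca cb x y t : ℝ) : ℝ :=
  ca * Real.exp (a * x + a ^ 2 * y + a ^ 3 * t) +
  cb * Real.exp (b * x + b ^ 2 * y + b ^ 3 * t)

/-- `u = 2 ∂²_x log τ`. -/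
noncomputable def uKP (a b ca cb x y t : ℝ) : ℝ :=
  2 * iteratedDeriv 2 (fun s => Real.log (tau2 a b ca cb s y t)) x

noncomputable def uKP_x (a b ca cb x y t : ℝ) : ℝ :=
  deriv (fun s => uKP a b ca cb s y t) x

noncomputable def uKP_t (a b ca cb x y t : ℝ) : ℝ :=
  deriv (fun s => uKP a b ca cb x y s) t

noncomputable def uKP_xxx (a b ca cb x y t : ℝ) : ℝ :=
  iteratedDeriv 3 (fun s => uKP a b ca cb s y t) x

noncomputable def uKP_yy (a b ca cb x y t : ℝ) : ℝ :=
  iteratedDeriv 2 (fun s => uKP a b ca cb x s t) y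

open Polynomial

noncomputable def logisticDeriv (f : ℝ[X]) : ℝ[X] := derivative f * (X * (1 - X))

theorem logisticDeriv_add (f g : ℝ[X]) :
    logisticDeriv (f + g) = logisticDeriv f + logisticDeriv g := by
  simp only [logisticDeriv, derivative_add, add_mul]

theorem logisticDeriv_sub (f g : ℝ[X]) :
    logisticDeriv (f - g) = logisticDeriv f - logisticDeriv g := by
  simp only [logisticDeriv, derivative_sub, sub_mul]

theorem logisticDeriv_mul (f g : ℝ[X]) :
    logisticDeriv (f * g) = logisticDeriv f * g + f * logisticDeriv g := by
  simp only [logisticDeriv, derivative_mul]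
  ring

theorem logisticDeriv_C (c : ℝ) : logisticDeriv (C c) = 0 := by
  simp only [logisticDeriv, derivative_C, zero_mul]

theorem logisticDeriv_ofNat (n : ℕ) [n.AtLeastTwo] : logisticDeriv (ofNat(n) : ℝ[X]) = 0 := by
  simp only [logisticDeriv, derivative_ofNat, zero_mul]

/-- The travelling-wave equation `v'' = v - 6 v²` of the KdV soliton `v = ¼ sech² (θ / 2)`. -/
theorem logisticDeriv_iterate_two_X_mul_one_sub_X :
    logisticDeriv^[2] (X * (1 - X)) = X * (1 - X) - 6 * (X * (1 - X)) ^ 2 := by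
  simp only [Function.iterate_succ_apply', Function.iterate_zero_apply, logisticDeriv,
    derivative_mul, derivative_add, derivative_sub, derivative_X, derivative_one, derivative_zero]
  ring

theorem logisticDeriv_iterate_four_X_mul_one_sub_X :
    logisticDeriv^[4] (X * (1 - X)) = logisticDeriv^[2] (X * (1 - X)) -
      12 * (logisticDeriv (X * (1 - X)) ^ 2 +
        X * (1 - X) * logisticDeriv^[2] (X * (1 - X))) := by
  rw [show 4 = 2 + 2 from rfl, Function.iterate_add_apply]
  conv_lhs => rw [logisticDeriv_iterate_two_X_mul_one_sub_X]
  generalize (X * (1 - X) : ℝ[X]) = v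
  simp only [Function.iterate_succ_apply', Function.iterate_zero_apply, sq, logisticDeriv_sub,
    logisticDeriv_mul, logisticDeriv_ofNat, zero_mul, zero_add, logisticDeriv_add]
  ring

noncomputable def kpFlux (a b : ℝ) : ℝ[X] :=
  C (-8 * (b - a) ^ 2 * (b ^ 3 - a ^ 3)) * logisticDeriv (X * (1 - X)) +
    C (24 * (b - a) ^ 5) * (X * (1 - X)) * logisticDeriv (X * (1 - X)) +
    C (2 * (b - a) ^ 5) * logisticDeriv^[3] (X * (1 - X))

theorem kpFlux_polynomial_identity (a b : ℝ) :
    C (b - a) * logisticDeriv (kpFlux a b) +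
      C (6 * (b - a) ^ 2 * (b ^ 2 - a ^ 2) ^ 2) * logisticDeriv^[2] (X * (1 - X)) = 0 := by
  have h4 := logisticDeriv_iterate_four_X_mul_one_sub_X
  simp only [kpFlux, Function.iterate_succ_apply', Function.iterate_zero_apply] at h4 ⊢
  generalize (X * (1 - X) : ℝ[X]) = v at h4 ⊢
  simp only [logisticDeriv_add, logisticDeriv_mul, logisticDeriv_C, h4]
  simp only [map_mul, map_sub, map_pow, map_neg, map_ofNat]
  ring

section Logistic

variable {p : ℝ → ℝ} {k : ℝ}

theorem HasDerivAt.polynomial_eval_of_logistic (f : ℝ[X]) {x : ℝ}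
    (hp : HasDerivAt p (k * (p x * (1 - p x))) x) :
    HasDerivAt (fun s => f.eval (p s)) (k * (logisticDeriv f).eval (p x)) x := by
  refine ((f.hasDerivAt (p x)).comp x hp).congr_deriv ?_
  simp only [logisticDeriv, eval_mul, eval_sub, eval_one, eval_X]
  ring

theorem iteratedDeriv_polynomial_eval_of_logistic
    (hp : ∀ x, HasDerivAt p (k * (p x * (1 - p x))) x) (c : ℝ) (f : ℝ[X]) (n : ℕ) :
    iteratedDeriv n (fun s => c * f.eval (p s)) =
      fun s => c * k ^ n * (logisticDeriv^[n] f).eval (p s) := by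
  induction n with
  | zero => simp
  | succ n ih =>
    funext x
    rw [iteratedDeriv_succ, ih, Function.iterate_succ_apply']
    exact (((hp x).polynomial_eval_of_logistic _).const_mul (c * k ^ n)).deriv.trans (by ring)

end Logistic

section TwoExponentials

variable {P Q : ℝ → ℝ} {ρ σ x : ℝ}

theorem HasDerivAt.const_mul_exp {f : ℝ → ℝ} {c : ℝ} (C : ℝ) (hf : HasDerivAt f c x) :
    HasDerivAt (fun s => C * Real.exp (f s)) (c * (C * Real.exp (f x))) x := by
  refine (hf.exp.const_mul C).congr_deriv ?_
  ring

theorem HasDerivAt.div_add_of_exp (hP : HasDerivAt P (ρ * P x) x) (hQ : HasDerivAt Q (σ * Q x) x)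
    (hPQ : P x + Q x ≠ 0) :
    HasDerivAt (fun s => Q s / (P s + Q s))
      ((σ - ρ) * (Q x / (P x + Q x) * (1 - Q x / (P x + Q x)))) x := by
  refine (hQ.div (hP.add hQ) hPQ).congr_deriv ?_
  simp only [Pi.add_apply]
  field_simp
  ring

theorem HasDerivAt.log_add_of_exp (hP : HasDerivAt P (ρ * P x) x) (hQ : HasDerivAt Q (σ * Q x) x)
    (hPQ : P x + Q x ≠ 0) :
    HasDerivAt (fun s => Real.log (P s + Q s)) (ρ + (σ - ρ) * (Q x / (P x + Q x))) x := by
  refine ((hP.add hQ).log hPQ).congr_deriv ?_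
  simp only [Pi.add_apply]
  field_simp
  ring

end TwoExponentials

noncomputable def tau2Weight (a b ca cb x y t : ℝ) : ℝ :=
  cb * Real.exp (b * x + b ^ 2 * y + b ^ 3 * t) / tau2 a b ca cb x y t

section OneSoliton

variable {a b ca cb : ℝ}

theorem hasDerivAt_phase_x (c y t x : ℝ) :
    HasDerivAt (fun s => c * s + c ^ 2 * y + c ^ 3 * t) c x := by
  simpa using (((hasDerivAt_id x).const_mul c).add_const (c ^ 2 * y)).add_const (c ^ 3 * t)

theorem hasDerivAt_phase_y (c x t y : ℝ) :
    HasDerivAt (fun s => c * x + c ^ 2 * s + c ^ 3 * t) (c ^ 2) y := by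
  simpa using (((hasDerivAt_id y).const_mul (c ^ 2)).const_add (c * x)).add_const (c ^ 3 * t)

theorem hasDerivAt_phase_t (c x y t : ℝ) :
    HasDerivAt (fun s => c * x + c ^ 2 * y + c ^ 3 * s) (c ^ 3) t := by
  simpa using ((hasDerivAt_id t).const_mul (c ^ 3)).const_add (c * x + c ^ 2 * y)

theorem tau2_pos (hca : 0 < ca) (hcb : 0 < cb) (x y t : ℝ) : 0 < tau2 a b ca cb x y t := by
  unfold tau2
  positivity

theorem hasDerivAt_log_tau2_x (hca : 0 < ca) (hcb : 0 < cb) (x y t : ℝ) :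
    HasDerivAt (fun s => Real.log (tau2 a b ca cb s y t))
      (a + (b - a) * tau2Weight a b ca cb x y t) x :=
  ((hasDerivAt_phase_x a y t x).const_mul_exp ca).log_add_of_exp
    ((hasDerivAt_phase_x b y t x).const_mul_exp cb) (tau2_pos hca hcb x y t).ne'

theorem hasDerivAt_tau2Weight_x (hca : 0 < ca) (hcb : 0 < cb) (x y t : ℝ) :
    HasDerivAt (fun s => tau2Weight a b ca cb s y t)
      ((b - a) * (tau2Weight a b ca cb x y t * (1 - tau2Weight a b ca cb x y t))) x :=
  ((hasDerivAt_phase_x a y t x).const_mul_exp ca).div_add_of_exp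
    ((hasDerivAt_phase_x b y t x).const_mul_exp cb) (tau2_pos hca hcb x y t).ne'

theorem hasDerivAt_tau2Weight_y (hca : 0 < ca) (hcb : 0 < cb) (x y t : ℝ) :
    HasDerivAt (fun s => tau2Weight a b ca cb x s t)
      ((b ^ 2 - a ^ 2) * (tau2Weight a b ca cb x y t * (1 - tau2Weight a b ca cb x y t))) y :=
  ((hasDerivAt_phase_y a x t y).const_mul_exp ca).div_add_of_exp
    ((hasDerivAt_phase_y b x t y).const_mul_exp cb) (tau2_pos hca hcb x y t).ne'

theorem hasDerivAt_tau2Weight_t (hca : 0 < ca) (hcb : 0 < cb) (x y t : ℝ) :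
    HasDerivAt (fun s => tau2Weight a b ca cb x y s)
      ((b ^ 3 - a ^ 3) * (tau2Weight a b ca cb x y t * (1 - tau2Weight a b ca cb x y t))) t :=
  ((hasDerivAt_phase_t a x y t).const_mul_exp ca).div_add_of_exp
    ((hasDerivAt_phase_t b x y t).const_mul_exp cb) (tau2_pos hca hcb x y t).ne'

theorem uKP_eq_eval (hca : 0 < ca) (hcb : 0 < cb) (x y t : ℝ) :
    uKP a b ca cb x y t = 2 * (b - a) ^ 2 * (X * (1 - X) : ℝ[X]).eval (tau2Weight a b ca cb x y t) := by
  have hlog : deriv (fun s => Real.log (tau2 a b ca cb s y t)) =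
      fun s => 1 * (C a + C (b - a) * X).eval (tau2Weight a b ca cb s y t) := by
    funext s
    simpa using (hasDerivAt_log_tau2_x hca hcb s y t).deriv
  rw [uKP, iteratedDeriv_succ', hlog,
    iteratedDeriv_polynomial_eval_of_logistic (hasDerivAt_tau2Weight_x hca hcb · y t)]
  simp only [Function.iterate_one, logisticDeriv, derivative_add, derivative_C_mul_X,
    derivative_C, zero_add, eval_mul, eval_C, eval_X, eval_sub, eval_one]
  ring

theorem iteratedDeriv_uKP_x (hca : 0 < ca) (hcb : 0 < cb) (n : ℕ) (x y t : ℝ) :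
    iteratedDeriv n (fun s => uKP a b ca cb s y t) x =
      2 * (b - a) ^ 2 * (b - a) ^ n *
        (logisticDeriv^[n] (X * (1 - X))).eval (tau2Weight a b ca cb x y t) := by
  simp only [uKP_eq_eval hca hcb]
  rw [iteratedDeriv_polynomial_eval_of_logistic (hasDerivAt_tau2Weight_x hca hcb · y t)]

theorem iteratedDeriv_uKP_y (hca : 0 < ca) (hcb : 0 < cb) (n : ℕ) (x y t : ℝ) :
    iteratedDeriv n (fun s => uKP a b ca cb x s t) y =
      2 * (b - a) ^ 2 * (b ^ 2 - a ^ 2) ^ n *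
        (logisticDeriv^[n] (X * (1 - X))).eval (tau2Weight a b ca cb x y t) := by
  simp only [uKP_eq_eval hca hcb]
  rw [iteratedDeriv_polynomial_eval_of_logistic (hasDerivAt_tau2Weight_y hca hcb x · t)]

theorem iteratedDeriv_uKP_t (hca : 0 < ca) (hcb : 0 < cb) (n : ℕ) (x y t : ℝ) :
    iteratedDeriv n (fun s => uKP a b ca cb x y s) t =
      2 * (b - a) ^ 2 * (b ^ 3 - a ^ 3) ^ n *
        (logisticDeriv^[n] (X * (1 - X))).eval (tau2Weight a b ca cb x y t) := by
  simp only [uKP_eq_eval hca hcb]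
  rw [iteratedDeriv_polynomial_eval_of_logistic (hasDerivAt_tau2Weight_t hca hcb x y ·)]

theorem kpFlux_eval_tau2Weight (hca : 0 < ca) (hcb : 0 < cb) (x y t : ℝ) :
    -4 * uKP_t a b ca cb x y t + 6 * uKP a b ca cb x y t * uKP_x a b ca cb x y t +
        uKP_xxx a b ca cb x y t = (kpFlux a b).eval (tau2Weight a b ca cb x y t) := by
  rw [uKP_t, uKP_x, uKP_xxx, ← iteratedDeriv_one, ← iteratedDeriv_one, iteratedDeriv_uKP_t hca hcb,
    iteratedDeriv_uKP_x hca hcb, iteratedDeriv_uKP_x hca hcb, uKP_eq_eval hca hcb]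
  simp only [kpFlux, Function.iterate_one, eval_add, eval_mul, eval_C]
  ring

end OneSoliton

theorem one_soliton_solves_KP_general (a b ca cb : ℝ) (hca : 0 < ca) (hcb : 0 < cb) :
    ∀ x y t : ℝ,
      deriv (fun s =>
          -4 * uKP_t a b ca cb s y t + 6 * uKP a b ca cb s y t * uKP_x a b ca cb s y t +
            uKP_xxx a b ca cb s y t) x
        + 3 * uKP_yy a b ca cb x y t = 0 := by
  intro x y t
  simp only [kpFlux_eval_tau2Weight hca hcb]
  rw [((hasDerivAt_tau2Weight_x hca hcb x y t).polynomial_eval_of_logistic _).deriv, uKP_yy,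
    iteratedDeriv_uKP_y hca hcb]
  have h := congrArg (eval (tau2Weight a b ca cb x y t)) (kpFlux_polynomial_identity a b)
  simp only [eval_add, eval_mul, eval_C, eval_zero] at h
  linarith

/-- For `a < b` and positive constants `c_a, c_b`, the function
`u = 2 ∂²_x log(c_a e^{ax+a²y+a³t} + c_b e^{bx+b²y+b³t})` satisfies the KP equation
`∂_x(−4u_t + 6uu_x + u_{xxx}) + 3u_{yy} = 0`. -/
theorem one_soliton_solves_KP (a b ca cb : ℝ) (hab : a < b) (hca : 0 < ca) (hcb : 0 < cb) :
    ∀ x y t : ℝ,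
      deriv (fun s =>
          -4 * uKP_t a b ca cb s y t + 6 * uKP a b ca cb s y t * uKP_x a b ca cb s y t +
            uKP_xxx a b ca cb s y t) x
        + 3 * uKP_yy a b ca cb x y t = 0 :=
  one_soliton_solves_KP_general a b ca cb hca hcb
end

section
/- Given an irreducible Grassmann necklace I = (I_1,…,I_n) of type (k,n), the map π defined by π(j) = i whenever I_{i+1} = (I_i \ {i}) ∪ {j} with j ≠ i (indices mod n) is a well-defined permutation of {1,…,n} with no fixed points. -/
/-- Given an irreducible Grassmann necklace `I = (I_1,…,I_n)` of type `(k,n)`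
(indices taken mod `n`, so here indexed by `Fin n`), the rule
"`π(j) = i` whenever `I_{i+1} = (I_i \ {i}) ∪ {j}` with `j ≠ i`"
well-defines a unique permutation of `{1,…,n}`, and this permutation has no fixed points. -/
theorem necklace_gives_derangement (n k : ℕ) [NeZero n]
    (I : Fin n → Finset (Fin n))
    (hcard : ∀ i, (I i).card = k)
    (hmem : ∀ i, i ∈ I i)
    (hstep : ∀ i, ∃ j, j ≠ i ∧ I (i + 1) = insert j ((I i).erase i)) :
    ∃! π : Equiv.Perm (Fin n),
      (∀ i, π i ≠ i) ∧
      ∀ i j : Fin n, j ≠ i → I (i + 1) = insert j ((I i).erase i) → π j = i := by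
  classical
  choose f hne hIf using hstep
  have hkpos : 0 < k := by
    have := Finset.card_pos.mpr ⟨(0 : Fin n), hmem 0⟩
    rwa [hcard] at this
  -- any valid entering element is not in I i
  have hnotmem : ∀ i j : Fin n, j ≠ i → I (i + 1) = insert j ((I i).erase i) → j ∉ I i := by
    intro i j hj hins hjI
    have hje : j ∈ (I i).erase i := Finset.mem_erase.mpr ⟨hj, hjI⟩
    have h1 : I (i + 1) = (I i).erase i := by
      rw [hins, Finset.insert_eq_self.mpr hje]
    have h2 : (I (i+1)).card = k - 1 := by
      rw [h1, Finset.card_erase_of_mem (hmem i), hcard]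
    rw [hcard] at h2
    omega
  have hfnot : ∀ i, f i ∉ I i := fun i => hnotmem i (f i) (hne i) (hIf i)
  -- uniqueness of entering element
  have huniq : ∀ i j : Fin n, j ≠ i → I (i + 1) = insert j ((I i).erase i) → j = f i := by
    intro i j hj hins
    have hjI : j ∉ I i := hnotmem i j hj hins
    have : j ∈ I (i + 1) := hins ▸ Finset.mem_insert_self _ _
    rw [hIf i, Finset.mem_insert] at this
    rcases this with h | h
    · exact h
    · exact absurd (Finset.mem_of_mem_erase h) hjI
  -- counting argument: for each j there is a unique i with f i = j
  have key : ∀ j : Fin n, ∃! i, f i = j := by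
    intro j
    set P : Fin n → Prop := fun i => j ∈ I i with hP
    have hA : (Finset.univ.filter fun i => P i ∧ ¬ P (i+1)) = {j} := by
      ext i
      simp only [Finset.mem_filter, Finset.mem_univ, true_and, Finset.mem_singleton]
      constructor
      · rintro ⟨h1, h2⟩
        by_contra hij
        apply h2
        rw [hP]
        simp only [hIf i, Finset.mem_insert]
        exact Or.inr (Finset.mem_erase.mpr ⟨fun h => hij (h ▸ rfl), h1⟩)
      · rintro rfl
        refine ⟨hmem i, fun hcon => ?_⟩
        have : i ∈ I (i + 1) := hcon
        rw [hIf i, Finset.mem_insert] at this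
        rcases this with h | h
        · exact hne i h.symm
        · exact (Finset.mem_erase.mp h).1 rfl
    have hB : (Finset.univ.filter fun i => ¬ P i ∧ P (i+1)) = Finset.univ.filter (fun i => f i = j) := by
      ext i
      simp only [Finset.mem_filter, Finset.mem_univ, true_and]
      constructor
      · rintro ⟨h1, h2⟩
        rw [hP] at h1 h2
        rw [hIf i, Finset.mem_insert] at h2
        rcases h2 with h | h
        · exact h.symm
        · exact absurd (Finset.mem_of_mem_erase h) h1
      · intro h
        subst h
        refine ⟨hfnot i, ?_⟩
        show f i ∈ I (i + 1)
        rw [hIf i]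
        exact Finset.mem_insert_self _ _
    have hshift : (Finset.univ.filter fun i => P (i+1)).card = (Finset.univ.filter P).card := by
      apply Finset.card_bij (fun a _ => a + 1)
      · intro a ha
        simp only [Finset.mem_filter, Finset.mem_univ, true_and] at ha ⊢
        exact ha
      · intro a ha b hb h
        exact add_right_cancel h
      · intro b hb
        simp only [Finset.mem_filter, Finset.mem_univ, true_and] at hb
        refine ⟨b - 1, ?_, ?_⟩
        · simp only [Finset.mem_filter, Finset.mem_univ, true_and, sub_add_cancel]
          exact hb
        · exact sub_add_cancel b 1
    have e1 : ((Finset.univ.filter fun i => P (i+1)).filter P).card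
        + ((Finset.univ.filter fun i => P (i+1)).filter (fun i => ¬ P i)).card
        = (Finset.univ.filter fun i => P (i+1)).card :=
      Finset.card_filter_add_card_filter_not _
    have e2 : ((Finset.univ.filter P).filter (fun i => P (i+1))).card
        + ((Finset.univ.filter P).filter (fun i => ¬ P (i+1))).card
        = (Finset.univ.filter P).card :=
      Finset.card_filter_add_card_filter_not _
    rw [Finset.filter_filter, Finset.filter_filter] at e1 e2
    have hsame : (Finset.univ.filter fun i => P (i+1) ∧ P i).card
        = (Finset.univ.filter fun i => P i ∧ P (i+1)).card := by
      congr 1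
      ext i
      simp [and_comm]
    have hcards : (Finset.univ.filter (fun i => f i = j)).card = 1 := by
      have := hshift
      rw [← e1, ← e2, hsame] at this
      have h2 : (Finset.univ.filter fun i => P (i+1) ∧ ¬ P i).card
          = (Finset.univ.filter fun i => P i ∧ ¬ P (i+1)).card := by omega
      have h3 : (Finset.univ.filter fun i => ¬ P i ∧ P (i+1))
          = (Finset.univ.filter fun i => P (i+1) ∧ ¬ P i) := by
        congr 1; ext i; simp [and_comm]
      rw [← hB, h3, h2, hA, Finset.card_singleton]
    obtain ⟨a, ha⟩ := Finset.card_eq_one.mp hcards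
    refine ⟨a, ?_, ?_⟩
    · have : a ∈ Finset.univ.filter (fun i => f i = j) := ha ▸ Finset.mem_singleton_self a
      exact (Finset.mem_filter.mp this).2
    · intro b hb
      have : b ∈ Finset.univ.filter (fun i => f i = j) :=
        Finset.mem_filter.mpr ⟨Finset.mem_univ b, hb⟩
      rw [ha, Finset.mem_singleton] at this
      exact this
  have hbij : Function.Bijective f := by
    constructor
    · intro a b hab
      obtain ⟨i, -, hu⟩ := key (f b)
      exact (hu a hab).trans (hu b rfl).symm
    · intro j
      obtain ⟨i, hi, -⟩ := key j
      exact ⟨i, hi⟩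
  set e := Equiv.ofBijective f hbij with he
  have heapp : ∀ i, e i = f i := fun i => rfl
  refine ⟨e.symm, ⟨?_, ?_⟩, ?_⟩
  · intro i hi
    have : i = f i := by
      conv_lhs => rw [← e.apply_symm_apply i, hi, heapp]
    exact hne i this.symm
  · intro i j hj hins
    have : j = f i := huniq i j hj hins
    rw [this, ← heapp, e.symm_apply_apply]
  · rintro π ⟨-, hπ⟩
    ext j
    obtain ⟨i, rfl⟩ := hbij.2 j
    have h1 : π (f i) = i := hπ i (f i) (hne i) (hIf i)
    have h2 : e.symm (f i) = i := by rw [← heapp, e.symm_apply_apply]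
    rw [h1, h2]
end

section
/- The map I ↦ π(I) is a bijection from irreducible Grassmann necklaces of type (k,n) to derangements of {1,…,n} with exactly k excedances; moreover the excedance positions of π(I) are exactly the elements of I_1. -/
/-!
Let `j i` be the element exchanged into the necklace at step `i`. Following `x` around the
cycle `I (x + 1), I (x + 2), …, I x`, it is absent at first (it has just been removed), it can
only re-enter as some `j i`, and it is present at the end; so `j` is onto, hence a bijection,
and `π = j⁻¹` is a derangement. The sets `{x | x <ᵢ π x}`, for the cyclic order
`i <ᵢ i + 1 <ᵢ ⋯ <ᵢ i - 1`, undergo the same exchanges, and the same walk around the cycle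
shows that a sequence is determined by its exchanges. So `I i = {x | x <ᵢ π x}`, which for
`i = 0` is the set of excedances of `π`; conversely these sets form a necklace for every
derangement `π`.
-/

/-- An irreducible Grassmann necklace of type `(k,n)`, with indices in `Fin n` (mod `n`):
a sequence `(I_i)` of `k`-element subsets with `i ∈ I_i` and
`I_{i+1} = (I_i \ {i}) ∪ {j}` for some `j ≠ i`, for every `i`. -/
structure GrassmannNecklace (n k : ℕ) [NeZero n] where
  I : Fin n → Finset (Fin n)
  card_eq : ∀ i, (I i).card = k
  mem_self : ∀ i, i ∈ I i
  step : ∀ i, ∃ j, j ≠ i ∧ I (i + 1) = insert j ((I i).erase i)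

/-- Derangements of `{1,…,n}` with exactly `k` excedances. -/
def DerangementsWithExcedances (n k : ℕ) :=
  {π : Equiv.Perm (Fin n) //
    (∀ i, π i ≠ i) ∧ (Finset.univ.filter (fun i => i < π i)).card = k}

variable {n : ℕ}

namespace Fin

/-- `x` precedes `y` in the cyclic order `i < i + 1 < ⋯ < i - 1`. -/
def CyclicLt (i x y : Fin n) : Prop := (x - i).val < (y - i).val

instance (i x y : Fin n) : Decidable (CyclicLt i x y) := Nat.decLt _ _

variable [NeZero n]

open scoped Fin.NatCast in
theorem induction_add_one {P : Fin n → Prop} (a : Fin n) (ha : P a)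
    (h : ∀ i, P i → P (i + 1)) (i : Fin n) : P i := by
  have key : ∀ t : ℕ, P (a + (t : Fin n)) := by
    intro t
    induction t with
    | zero => simpa using ha
    | succ t ih => simpa [add_assoc] using h _ ih
  simpa using key (i - a).val

theorem cyclicLt_zero_iff {x y : Fin n} : CyclicLt 0 x y ↔ x < y := by
  rw [CyclicLt, sub_zero, sub_zero, Fin.lt_def]

theorem cyclicLt_add_one_iff {i x y : Fin n} (hxy : x ≠ y) :
    CyclicLt (i + 1) x y ↔ y = i ∨ (CyclicLt i x y ∧ x ≠ i) := by
  obtain ⟨m, rfl⟩ : ∃ m, n = m + 1 := Nat.exists_eq_succ_of_ne_zero (NeZero.ne n)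
  rw [CyclicLt, CyclicLt, sub_add_eq_sub_sub, sub_add_eq_sub_sub, coe_sub_one, coe_sub_one,
    ne_eq, ← sub_eq_zero (a := x), ← sub_eq_zero (a := y)]
  have hxy' : (x - i).val ≠ (y - i).val := fun h => hxy (sub_left_inj.mp (Fin.ext h))
  have := (x - i).isLt; have := (y - i).isLt
  split_ifs <;> simp only [Fin.ext_iff, Fin.val_zero] at * <;> omega

end Fin

section

variable [NeZero n]

def IsExchangeSeq (A : Fin n → Finset (Fin n)) (f : Fin n → Fin n) : Prop :=
  ∀ i, A (i + 1) = insert (f i) ((A i).erase i)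

namespace IsExchangeSeq

variable {A B : Fin n → Finset (Fin n)} {f : Fin n → Fin n}

theorem mem_add_one_iff (hA : IsExchangeSeq A f) {i x : Fin n} :
    x ∈ A (i + 1) ↔ x = f i ∨ (x ∈ A i ∧ x ≠ i) := by
  rw [hA i, Finset.mem_insert, Finset.mem_erase, and_comm]

theorem notMem_add_one (hA : IsExchangeSeq A f) {x : Fin n} (hx : f x ≠ x) :
    x ∉ A (x + 1) := by
  simp [hA.mem_add_one_iff, Ne.symm hx]

theorem unique (hA : IsExchangeSeq A f) (hB : IsExchangeSeq B f) (hf : ∀ i, f i ≠ i) :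
    A = B := by
  funext i
  ext x
  refine Fin.induction_add_one (P := fun i => x ∈ A i ↔ x ∈ B i) (x + 1)
    (iff_of_false (hA.notMem_add_one (hf x)) (hB.notMem_add_one (hf x))) (fun i hi => ?_) i
  rw [hA.mem_add_one_iff, hB.mem_add_one_iff, hi]

theorem surjective (hA : IsExchangeSeq A f) (hf : ∀ i, f i ≠ i) (hself : ∀ i, i ∈ A i) :
    Function.Surjective f := by
  intro x
  by_contra! hx
  refine Fin.induction_add_one (P := fun i => x ∉ A i) (x + 1) (hA.notMem_add_one (hf x))
    (fun i hi => ?_) x (hself x)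
  simp [hA.mem_add_one_iff, hi, (hx i).symm]

theorem card_eq (hA : IsExchangeSeq A f) (hself : ∀ i, i ∈ A i) (hnew : ∀ i, f i ∉ A i)
    (i j : Fin n) : (A i).card = (A j).card := by
  refine Fin.induction_add_one (P := fun i => (A i).card = (A j).card) j rfl (fun i hi => ?_) i
  rw [hA i, Finset.card_insert_of_notMem (fun h => hnew i (Finset.mem_of_mem_erase h)),
    Finset.card_erase_add_one (hself i), hi]

end IsExchangeSeq

end

namespace Equiv.Perm

def cyclicSet (π : Equiv.Perm (Fin n)) (i : Fin n) : Finset (Fin n) :=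
  Finset.univ.filter fun x => Fin.CyclicLt i x (π x)

theorem mem_cyclicSet {π : Equiv.Perm (Fin n)} {i x : Fin n} :
    x ∈ π.cyclicSet i ↔ Fin.CyclicLt i x (π x) := by
  simp [cyclicSet]

variable [NeZero n] {π : Equiv.Perm (Fin n)}

theorem cyclicSet_zero : π.cyclicSet 0 = Finset.univ.filter fun x => x < π x := by
  simp only [cyclicSet, Fin.cyclicLt_zero_iff]

theorem self_mem_cyclicSet {i : Fin n} (hi : π i ≠ i) : i ∈ π.cyclicSet i := by
  rw [mem_cyclicSet, Fin.CyclicLt, sub_self, Fin.val_zero, Nat.pos_iff_ne_zero, Ne,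
    Fin.val_eq_zero_iff, sub_eq_zero]
  exact hi

theorem symm_apply_notMem_cyclicSet (i : Fin n) : π.symm i ∉ π.cyclicSet i := by
  simp [mem_cyclicSet, Fin.CyclicLt]

theorem isExchangeSeq_cyclicSet (hπ : ∀ x, π x ≠ x) : IsExchangeSeq π.cyclicSet π.symm := by
  intro i
  ext x
  rw [Finset.mem_insert, Finset.mem_erase, mem_cyclicSet, mem_cyclicSet,
    Fin.cyclicLt_add_one_iff (hπ x).symm, eq_symm_apply, and_comm]

end Equiv.Perm

namespace GrassmannNecklace

variable [NeZero n] {k : ℕ} (N : GrassmannNecklace n k)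

attribute [ext] GrassmannNecklace

noncomputable def exchange (i : Fin n) : Fin n := (N.step i).choose

theorem exchange_ne (i : Fin n) : N.exchange i ≠ i := (N.step i).choose_spec.1

theorem isExchangeSeq : IsExchangeSeq N.I N.exchange := fun i => (N.step i).choose_spec.2

theorem notMem_of_step {i j : Fin n} (hj : j ≠ i)
    (h : N.I (i + 1) = insert j ((N.I i).erase i)) : j ∉ N.I i := by
  intro hmem
  have hcard := N.card_eq (i + 1)
  rw [h, Finset.insert_eq_of_mem (Finset.mem_erase.mpr ⟨hj, hmem⟩),
    Finset.card_erase_of_mem (N.mem_self i), N.card_eq] at hcard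
  have := Finset.card_pos.mpr ⟨i, N.mem_self i⟩
  rw [N.card_eq] at this
  omega

theorem eq_exchange_of_step {i j : Fin n} (hj : j ≠ i)
    (h : N.I (i + 1) = insert j ((N.I i).erase i)) : j = N.exchange i := by
  have hj_mem : j ∈ insert (N.exchange i) ((N.I i).erase i) := by
    rw [← N.isExchangeSeq i, h]
    exact Finset.mem_insert_self _ _
  rcases Finset.mem_insert.mp hj_mem with rfl | hj_old
  · rfl
  · exact absurd (Finset.mem_of_mem_erase hj_old) (N.notMem_of_step hj h)

theorem exchange_bijective : Function.Bijective N.exchange :=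
  Finite.surjective_iff_bijective.mp (N.isExchangeSeq.surjective N.exchange_ne N.mem_self)

noncomputable def perm : Equiv.Perm (Fin n) := (Equiv.ofBijective _ N.exchange_bijective).symm

theorem perm_symm_apply (i : Fin n) : N.perm.symm i = N.exchange i := rfl

theorem perm_exchange (i : Fin n) : N.perm (N.exchange i) = i :=
  (Equiv.ofBijective _ N.exchange_bijective).symm_apply_apply i

theorem perm_apply_ne (x : Fin n) : N.perm x ≠ x := fun h =>
  N.exchange_ne x (by rw [← perm_symm_apply, Equiv.symm_apply_eq, h])

theorem I_eq_cyclicSet : N.I = N.perm.cyclicSet :=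
  N.isExchangeSeq.unique (N.perm.isExchangeSeq_cyclicSet N.perm_apply_ne) N.exchange_ne

theorem excedances_perm : Finset.univ.filter (fun x => x < N.perm x) = N.I 0 := by
  rw [I_eq_cyclicSet, Equiv.Perm.cyclicSet_zero]

end GrassmannNecklace

namespace DerangementsWithExcedances

variable {k : ℕ}

theorem symm_apply_ne (π : DerangementsWithExcedances n k) (i : Fin n) : π.1.symm i ≠ i :=
  fun h => π.2.1 i (π.1.symm_apply_eq.mp h).symm

variable [NeZero n]

def necklace (π : DerangementsWithExcedances n k) : GrassmannNecklace n k where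
  I := π.1.cyclicSet
  card_eq i := by
    rw [(π.1.isExchangeSeq_cyclicSet π.2.1).card_eq (fun i => π.1.self_mem_cyclicSet (π.2.1 i))
      π.1.symm_apply_notMem_cyclicSet i 0, Equiv.Perm.cyclicSet_zero, π.2.2]
  mem_self i := π.1.self_mem_cyclicSet (π.2.1 i)
  step i := ⟨π.1.symm i, π.symm_apply_ne i, π.1.isExchangeSeq_cyclicSet π.2.1 i⟩

theorem necklace_perm (π : DerangementsWithExcedances n k) : π.necklace.perm = π.1 :=
  Equiv.symm_bijective.injective <| Equiv.ext fun i =>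
    (π.necklace.eq_exchange_of_step (π.symm_apply_ne i)
    (π.1.isExchangeSeq_cyclicSet π.2.1 i)).symm

end DerangementsWithExcedances

noncomputable def GrassmannNecklace.equivDerangements [NeZero n] {k : ℕ} :
    GrassmannNecklace n k ≃ DerangementsWithExcedances n k where
  toFun N := ⟨N.perm, N.perm_apply_ne, by rw [N.excedances_perm, N.card_eq]⟩
  invFun := DerangementsWithExcedances.necklace
  left_inv N := GrassmannNecklace.ext N.I_eq_cyclicSet.symm
  right_inv π := Subtype.ext π.necklace_perm

/-- The map `I ↦ π(I)`, defined by `π(j) = i` whenever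
`I_{i+1} = (I_i \ {i}) ∪ {j}`, is a bijection from irreducible Grassmann necklaces of type
`(k,n)` to derangements of `{1,…,n}` with exactly `k` excedances, and moreover the
excedance positions of `π(I)` are exactly the elements of `I_1` (the first entry,
here indexed by `0`). -/
theorem necklace_derangement_bijection (n k : ℕ) [NeZero n] :
    ∃! Φ : GrassmannNecklace n k ≃ DerangementsWithExcedances n k,
      ∀ N : GrassmannNecklace n k,
        (∀ i j : Fin n, j ≠ i → N.I (i + 1) = insert j ((N.I i).erase i) →
          (Φ N).1 j = i) ∧
        Finset.univ.filter (fun i => i < (Φ N).1 i) = N.I 0 := by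
  refine ⟨GrassmannNecklace.equivDerangements,
    fun N => ⟨fun i j hj h => ?_, N.excedances_perm⟩, fun Φ hΦ => ?_⟩
  · show N.perm j = i
    rw [N.eq_exchange_of_step hj h, N.perm_exchange]
  · refine Equiv.ext fun N => Subtype.ext (Equiv.ext fun x => ?_)
    obtain ⟨i, rfl⟩ := N.exchange_bijective.surjective x
    rw [(hΦ N).1 i _ (N.exchange_ne i) (N.isExchangeSeq i)]
    exact (N.perm_exchange i).symm
end

section
/- Let M be the set of k-subsets I of {1,…,n} with Δ_I(A) > 0 for some fixed k×n matrix A of rank k with all maximal minors nonnegative. For each r ∈ {1,…,n}, let I_r be the lexicographically minimal element of M with respect to the cyclically shifted order r < r+1 < ⋯ < n < 1 < ⋯ < r−1. Then the sequence (I_1,…,I_n) satisfies I_{r+1} ⊆ (I_r \ {r}) ∪ {some element} in the sense that I_{r+1} = I_r if r ∉ I_r, and otherwise I_{r+1} = (I_r \ {r}) ∪ {j} for some j. -/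
/-!
Write `a ≺ᵣ b` for `a - r < b - r`, the order `r, r + 1, …, r - 1`. Since all minors are
nonnegative, the sets with positive minor are the column bases of `A`, so minimality of `I r`
forces `x ≺ᵣ y` whenever `I r` with `x` exchanged for `y` is again a basis.
Let `x ∈ I r`, `x ≠ r`, and suppose `x ∉ I (r + 1)`; let `W` be the elements of `I (r + 1)`
that come before `x` in `≺ᵣ₊₁`. If the column of `x` lies in the span of `W`, some `y ∈ W` can
replace `x` in `I r`, so `x ≺ᵣ y`; as `y ≠ r` (`r` comes last in `≺ᵣ₊₁`) the orders `≺ᵣ` and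
`≺ᵣ₊₁` agree on `x, y`, contradicting `y ≺ᵣ₊₁ x`. Otherwise `x` can replace some
`y ∈ I (r + 1) \ W`, so `y ≺ᵣ₊₁ x` and `y ∈ W` after all. Hence `(I r).erase r ⊆ I (r + 1)`,
and both sets have `k` elements.
-/

open Submodule
open scoped Matrix

section LinearIndepOn

variable {ι K V : Type*} [DivisionRing K] [AddCommGroup V] [Module K V] {v : ι → V}

theorem LinearIndepOn.exists_insert_sdiff_singleton_of_mem_span {J W : Set ι} {x : ι}
    (hJ : LinearIndepOn K v J) (hx : x ∈ J) (hxW : v x ∈ span K (v '' W)) :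
    ∃ y ∈ W, y ∉ J \ {x} ∧ LinearIndepOn K v (insert y (J \ {x})) := by
  by_contra! hW
  have hJx : LinearIndepOn K v (J \ {x}) := hJ.mono Set.sdiff_subset
  have hspan : span K (v '' W) ≤ span K (v '' (J \ {x})) := by
    refine span_le.mpr ?_
    rintro _ ⟨y, hy, rfl⟩
    by_contra hy'
    obtain ⟨hins, hyJ⟩ := hJx.notMem_span_iff.mp hy'
    exact hW y hy hyJ hins
  have hxJ : LinearIndepOn K v (insert x (J \ {x})) := by
    rwa [Set.insert_sdiff_singleton, Set.insert_eq_of_mem hx]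
  exact hJx.notMem_span_iff.mpr ⟨hxJ, fun h => h.2 rfl⟩ (hspan hxW)

theorem LinearIndepOn.exists_insert_sdiff_singleton_of_notMem_span {B W : Set ι} {x : ι}
    (hB : LinearIndepOn K v B) (hxB : v x ∈ span K (v '' B))
    (hxW : v x ∉ span K (v '' W)) :
    ∃ y ∈ B \ W, LinearIndepOn K v (insert x (B \ {y})) := by
  obtain ⟨l, hlB, hl⟩ := (Finsupp.mem_span_image_iff_linearCombination K).mp hxB
  obtain ⟨y, hyB, hyW, hly⟩ : ∃ y ∈ B, y ∉ W ∧ l y ≠ 0 := by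
    by_contra! h
    refine hxW ((Finsupp.mem_span_image_iff_linearCombination K).mpr ⟨l, fun y hy => ?_, hl⟩)
    by_contra hyW
    exact (Finsupp.mem_support_iff.mp hy) (h y (hlB hy) hyW)
  refine ⟨y, ⟨hyB, hyW⟩, ((hB.mono Set.sdiff_subset).notMem_span_iff.mp fun hxy => ?_).1⟩
  obtain ⟨l', hl'B, hl'⟩ := (Finsupp.mem_span_image_iff_linearCombination K).mp hxy
  have hll' : l = l' := linearIndepOn_iffₛ.mp hB l hlB l'
    ((Finsupp.supported_mono Set.sdiff_subset) hl'B) (hl.trans hl'.symm)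
  refine hly (hll' ▸ ?_)
  by_contra h
  exact (hl'B (Finsupp.mem_support_iff.mpr h)).2 rfl

theorem LinearIndepOn.span_image_eq_top_of_card_eq_finrank [FiniteDimensional K V]
    {s : Finset ι} (hs : LinearIndepOn K v (s : Set ι)) (hcard : s.card = Module.finrank K V) :
    span K (v '' s) = ⊤ := by
  rw [Set.image_eq_range]
  exact LinearIndependent.span_eq_top_of_card_eq_finrank' hs (by simpa using hcard)

end LinearIndepOn

namespace Fin

variable {n : ℕ} [NeZero n]

theorem sub_one_lt_sub_one_iff {a b : Fin n} (ha : a ≠ 0) (hb : b ≠ 0) :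
    a - 1 < b - 1 ↔ a < b := by
  obtain ⟨m, rfl⟩ := Nat.exists_eq_succ_of_ne_zero (NeZero.ne n)
  rw [Fin.lt_def, Fin.lt_def, Fin.coe_sub_one, Fin.coe_sub_one, if_neg ha, if_neg hb]
  have : (a : ℕ) ≠ 0 := Fin.val_ne_iff.mpr ha
  have : (b : ℕ) ≠ 0 := Fin.val_ne_iff.mpr hb
  omega

theorem sub_add_one_lt_sub_add_one_iff {a b r : Fin n} (ha : a ≠ r) (hb : b ≠ r) :
    a - (r + 1) < b - (r + 1) ↔ a - r < b - r := by
  rw [sub_add_eq_sub_sub, sub_add_eq_sub_sub]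
  exact sub_one_lt_sub_one_iff (sub_ne_zero.mpr ha) (sub_ne_zero.mpr hb)

theorem not_sub_add_one_lt (r c : Fin n) : ¬ r - (r + 1) < c := by
  obtain ⟨m, rfl⟩ := Nat.exists_eq_succ_of_ne_zero (NeZero.ne n)
  rw [sub_add_eq_sub_sub, sub_self, zero_sub, not_lt, Fin.le_def, Fin.coe_neg_one]
  exact Nat.le_of_lt_succ c.isLt

end Fin

section CyclicLex

variable {K V : Type*} [DivisionRing K] [AddCommGroup V] [Module K V] {n : ℕ} [NeZero n]
  {v : Fin n → V}

theorem mem_of_exchange_minimal {J L : Set (Fin n)} {r x : Fin n}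
    (hJ : LinearIndepOn K v J)
    (hJmin : ∀ a ∈ J, ∀ b ∉ J, LinearIndepOn K v (insert b (J \ {a})) → a - r < b - r)
    (hL : LinearIndepOn K v L)
    (hLmin : ∀ a ∈ L, ∀ b ∉ L, LinearIndepOn K v (insert b (L \ {a})) →
      a - (r + 1) < b - (r + 1))
    (hxJ : x ∈ J) (hxr : x ≠ r) (hxspan : v x ∈ span K (v '' L)) : x ∈ L := by
  by_contra hxL
  set W := {z ∈ L | z - (r + 1) < x - (r + 1)}
  by_cases hxW : v x ∈ span K (v '' W)
  · obtain ⟨y, ⟨hyL, hyx⟩, hyJx, hins⟩ := hJ.exists_insert_sdiff_singleton_of_mem_span hxJ hxW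
    have hyJ : y ∉ J := fun hyJ => hyJx ⟨hyJ, fun h => hxL (h ▸ hyL)⟩
    have hyr : y ≠ r := by rintro rfl; exact Fin.not_sub_add_one_lt y _ hyx
    exact lt_asymm hyx ((Fin.sub_add_one_lt_sub_add_one_iff hxr hyr).mpr (hJmin x hxJ y hyJ hins))
  · obtain ⟨y, ⟨hyL, hyW⟩, hins⟩ := hL.exists_insert_sdiff_singleton_of_notMem_span hxspan hxW
    exact hyW ⟨hyL, hLmin y hyL x hxL hins⟩

end CyclicLex

section Minor

variable {k n : ℕ} {A : Matrix (Fin k) (Fin n) ℝ} {S : Finset (Fin n)}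

theorem minor_ne_zero_iff (h : S.card = k) :
    minor A S ≠ 0 ↔ LinearIndepOn ℝ Aᵀ (S : Set (Fin n)) := by
  rw [minor, dif_pos h, ← isUnit_iff_ne_zero, ← Matrix.isUnit_iff_isUnit_det,
    ← Matrix.linearIndependent_cols_iff_isUnit]
  exact linearIndependent_equiv ((S.orderIsoOfFin h).toEquiv.trans (Equiv.setCongr rfl))
    (f := fun i : (S : Set (Fin n)) => Aᵀ i)

theorem minor_pos_of_linearIndepOn (hnn : ∀ S : Finset (Fin n), 0 ≤ minor A S)
    (h : S.card = k) (hS : LinearIndepOn ℝ Aᵀ (S : Set (Fin n))) : 0 < minor A S :=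
  (hnn S).lt_of_ne ((minor_ne_zero_iff h).mpr hS).symm

theorem sub_lt_sub_of_linearIndepOn_insert_sdiff
    (hnn : ∀ S : Finset (Fin n), 0 ≤ minor A S) {J : Finset (Fin n)} (hJ : J.card = k) {r : Fin n}
    (hmin : ∀ T : Finset (Fin n), T.card = k → 0 < minor A T →
      ∀ b ∈ T \ J, ∃ a ∈ J \ T, a - r < b - r)
    (x : Fin n) (hx : x ∈ J) (y : Fin n) (hy : y ∉ J)
    (hxy : LinearIndepOn ℝ Aᵀ (insert y (J \ {x} : Set (Fin n)))) : x - r < y - r := by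
  set T := insert y (J.erase x)
  have hTk : T.card = k := by
    rw [Finset.card_insert_of_notMem fun h => hy (Finset.mem_of_mem_erase h),
      Finset.card_erase_add_one hx, hJ]
  have hTpos : 0 < minor A T :=
    minor_pos_of_linearIndepOn hnn hTk (by rwa [Finset.coe_insert, Finset.coe_erase])
  obtain ⟨a, haJT, ha⟩ := hmin T hTk hTpos y (by simp [T, hy])
  obtain ⟨haJ, haT⟩ := Finset.mem_sdiff.mp haJT
  obtain rfl : a = x := by
    by_contra hax
    exact haT (Finset.mem_insert_of_mem (Finset.mem_erase.mpr ⟨hax, haJ⟩))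
  exact ha

end Minor

theorem lex_minima_form_necklace_general (n k : ℕ) [NeZero n]
    (A : Matrix (Fin k) (Fin n) ℝ)
    (hnn : ∀ S : Finset (Fin n), 0 ≤ minor A S)
    (I : Fin n → Finset (Fin n))
    (hImem : ∀ r, (I r).card = k ∧ 0 < minor A (I r))
    (hImin : ∀ r : Fin n, ∀ T : Finset (Fin n), T.card = k → 0 < minor A T →
      ∀ b ∈ T \ I r, ∃ a ∈ I r \ T, a - r < b - r) :
    ∀ r : Fin n,
      (r ∉ I r → I (r + 1) = I r) ∧
      (r ∈ I r → ∃ j : Fin n, I (r + 1) = insert j ((I r).erase r)) := by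
  intro r
  have hindep (s : Fin n) : LinearIndepOn ℝ Aᵀ (I s : Set (Fin n)) :=
    (minor_ne_zero_iff (hImem s).1).mp (hImem s).2.ne'
  have hexch (s : Fin n) := sub_lt_sub_of_linearIndepOn_insert_sdiff hnn (hImem s).1 (hImin s)
  have hspan : span ℝ (Aᵀ '' I (r + 1)) = ⊤ :=
    (hindep (r + 1)).span_image_eq_top_of_card_eq_finrank (by simp [(hImem (r + 1)).1])
  have hsub : (I r).erase r ⊆ I (r + 1) := fun x hx =>
    mem_of_exchange_minimal (hindep r) (hexch r) (hindep (r + 1)) (hexch (r + 1))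
      (Finset.mem_of_mem_erase hx) (Finset.ne_of_mem_erase hx) (hspan ▸ mem_top)
  have hcard : (I r).card = (I (r + 1)).card := (hImem r).1.trans (hImem (r + 1)).1.symm
  refine ⟨fun hr => ?_, fun hr => ?_⟩
  · rw [Finset.erase_eq_of_notMem hr] at hsub
    exact (Finset.eq_of_subset_of_card_le hsub hcard.ge).symm
  · obtain ⟨j, -, hj⟩ :=
      Finset.exists_eq_insert_iff.mpr ⟨hsub, (Finset.card_erase_add_one hr).trans hcard⟩
    exact ⟨j, hj.symm⟩

/-- Let `A` be a rank-`k` totally nonnegative `k × n` matrix, with matroid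
`M = {S : Δ_S(A) > 0}`.  For each `r`, let `I_r ∈ M` be lexicographically minimal for the
cyclically shifted order `r < r+1 < ⋯ < n < 1 < ⋯ < r−1` (lex-minimality is expressed via
the shifted order `a ↦ a − r` on `Fin n`: for every competitor `T ∈ M` and every
`b ∈ T \ I_r` there is `a ∈ I_r \ T` smaller than `b` in the shifted order).  Then
`I_{r+1} = I_r` if `r ∉ I_r`, and otherwise `I_{r+1} = (I_r \ {r}) ∪ {j}` for some `j`. -/
theorem lex_minima_form_necklace (n k : ℕ) [NeZero n] (hk : k ≤ n)
    (A : Matrix (Fin k) (Fin n) ℝ) (hrank : A.rank = k)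
    (hnn : ∀ S : Finset (Fin n), 0 ≤ minor A S)
    (I : Fin n → Finset (Fin n))
    (hImem : ∀ r, (I r).card = k ∧ 0 < minor A (I r))
    (hImin : ∀ r : Fin n, ∀ T : Finset (Fin n), T.card = k → 0 < minor A T →
      ∀ b ∈ T \ I r, ∃ a ∈ I r \ T, a - r < b - r) :
    ∀ r : Fin n,
      (r ∉ I r → I (r + 1) = I r) ∧
      (r ∈ I r → ∃ j : Fin n, I (r + 1) = insert j ((I r).erase r)) :=
  lex_minima_form_necklace_general n k A hnn I hImem hImin
end

section
/- If all parameters κ_1 < ⋯ < κ_n are integers, then for any point A of a positroid cell and any fixed time t₀, the contour plot C_{t₀}(u_A) — the locus where the piecewise-linear function f_A(x,y,t₀) = max_{J∈M} [ log(Δ_J(A) K_J) + Σ_{i∈J}(κ_i x + κ_i² y + κ_i³ t₀) ] fails to be locally linear — is a tropical curve in ℝ², i.e., the corner locus of a tropical polynomial (a finite maximum of affine-linear functions with integer slopes). -/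
/-- The nonlinearity locus of `f : ℝ² → ℝ`: points near which `f` is not affine. -/
def NonlinLocus (f : ℝ × ℝ → ℝ) : Set (ℝ × ℝ) :=
  {p | ¬ ∃ a b c : ℝ, ∀ᶠ q in nhds p, f q = a * q.1 + b * q.2 + c}

/-- A tropical curve in `ℝ²`: the corner (nonlinearity) locus of a finite maximum of
affine-linear functions with integer slopes. -/
def IsTropicalCurve (C : Set (ℝ × ℝ)) : Prop :=
  ∃ (F : Finset (ℤ × ℤ × ℝ)) (hF : F.Nonempty),
    C = NonlinLocus (fun p =>
      F.sup' hF (fun v => (v.1 : ℝ) * p.1 + (v.2.1 : ℝ) * p.2 + v.2.2))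

/-!
`f_A(·, ·, t₀)` is already a tropical polynomial in `(x, y)`: the term indexed by `J` is affine
with integer slopes `(∑_{i∈J} κ_i, ∑_{i∈J} κ_i²)` and constant `log(c J) + t₀ ∑_{i∈J} κ_i³`.
-/

theorem isTropicalCurve_nonlinLocus_sup' {ι : Type*} (s : Finset ι) (hs : s.Nonempty)
    (a b : ι → ℤ) (d : ι → ℝ) :
    IsTropicalCurve (NonlinLocus fun p => s.sup' hs fun i => a i * p.1 + b i * p.2 + d i) := by
  classical
  refine ⟨s.image fun i => (a i, b i, d i), hs.image _, ?_⟩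
  simp only [Finset.sup'_image]
  rfl

theorem sum_kp_phase_eq {ι : Type*} (J : Finset ι) (κ : ι → ℤ) (x y t : ℝ) :
    ∑ i ∈ J, ((κ i : ℝ) * x + (κ i : ℝ) ^ 2 * y + (κ i : ℝ) ^ 3 * t) =
      ((∑ i ∈ J, κ i : ℤ) : ℝ) * x + ((∑ i ∈ J, κ i ^ 2 : ℤ) : ℝ) * y +
        ∑ i ∈ J, (κ i : ℝ) ^ 3 * t := by
  push_cast
  rw [Finset.sum_add_distrib, Finset.sum_add_distrib, Finset.sum_mul, Finset.sum_mul]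

theorem contour_plot_is_tropical_curve_general (n : ℕ) (κ : Fin n → ℤ)
    (M : Finset (Finset (Fin n))) (hM : M.Nonempty)
    (c : Finset (Fin n) → ℝ) (t₀ : ℝ) :
    IsTropicalCurve (NonlinLocus (fun p =>
      M.sup' hM (fun J => Real.log (c J) +
        ∑ i ∈ J, ((κ i : ℝ) * p.1 + (κ i : ℝ) ^ 2 * p.2 + (κ i : ℝ) ^ 3 * t₀)))) := by
  convert isTropicalCurve_nonlinLocus_sup' M hM (fun J => ∑ i ∈ J, κ i)
    (fun J => ∑ i ∈ J, κ i ^ 2) (fun J => Real.log (c J) + ∑ i ∈ J, (κ i : ℝ) ^ 3 * t₀) using 4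
  rw [sum_kp_phase_eq]
  ring

/-- If the parameters `κ_1 < ⋯ < κ_n` are integers, then for any point `A` of a
positroid cell (with positive minors indexed by `M`, giving positive constants
`Δ_J(A)K_J = c J`) and any fixed time `t₀`, the contour plot — the locus where
`f_A(x,y,t₀) = max_{J∈M}[log(c J) + Σ_{i∈J}(κ_i x + κ_i² y + κ_i³ t₀)]` fails to be
locally linear — is a tropical curve in `ℝ²`. -/
theorem contour_plot_is_tropical_curve (n k : ℕ) (κ : Fin n → ℤ) (hκ : StrictMono κ)
    (M : Finset (Finset (Fin n))) (hM : M.Nonempty) (hMk : ∀ S ∈ M, S.card = k)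
    (c : Finset (Fin n) → ℝ) (hc : ∀ S ∈ M, 0 < c S) (t₀ : ℝ) :
    IsTropicalCurve (NonlinLocus (fun p =>
      M.sup' hM (fun J => Real.log (c J) +
        ∑ i ∈ J, ((κ i : ℝ) * p.1 + (κ i : ℝ) ^ 2 * p.2 + (κ i : ℝ) ^ 3 * t₀)))) :=
  contour_plot_is_tropical_curve_general n κ M hM c t₀
end
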